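/- arXiv:2603.04556 — 2 statements merged into one kernel-verified Lean document; each statement's English description precedes it below -/
import Mathlib

section
/- Fix an integer G ≥ 1, a nonempty finite set M (memory states), and a nonempty set J̃ ⊆ [0,∞) (allowed rates). For each a ∈ {1,…,G} let γ^{(a)}: M → J̃ × J̃ be a parameter-update function, writing γ^{(a)}_i(m) ∈ J̃ for its components (i ∈ {0,1}), and let u: M × {1,…,G} × {0,1} → M be an arbitrary memory-update function. Consider the continuous-time Markov chain on the finite state space V = {0,1}^G × M whose only nonzero jump rates are, for each a ∈ {1,…,G} and each (c,m) ∈ V, a jump from (c,m) to (c ⊕ e_a, u(m,a,c_a)) at rate γ^{(a)}_{c_a}(m), where c ⊕ e_a denotes c with its a-th bit flipped (for distinct a these target states are distinct, so the rate matrix is well defined); in particular the escape rate from (c,m) is Γ_{(c,m)} = Σ_{a=1}^G γ^{(a)}_{c_a}(m). Let p be any stationary distribution of this chain, let w be arbitrary real weights on the jumps, and let F, D and S = F²/D be the asymptotic average current, noise and signal-to-noise ratio (assume the improper integral defining D converges entrywise and D > 0). Then S ≤ max_{m∈M} max_{i∈{0,1}^G} Σ_{a=1}^G γ^{(a)}_{i_a}(m).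 -/
open Matrix MeasureTheory

/-- The rate matrix of a continuous-time Markov chain with off-diagonal entries
`R j i` (the rate of jumps from state `i` to state `j`, for `j ≠ i`) and diagonal
entries minus the escape rates `Γ_i = Σ_{j ≠ i} R j i`. -/
noncomputable def ctmcRateMatrix {V : Type} [Fintype V] [DecidableEq V]
    (R : V → V → ℝ) : Matrix V V ℝ :=
  Matrix.of fun j i => if j = i then -(∑ k, if k = i then (0 : ℝ) else R k i) else R j i

/-- The matrix `C` with entries `C j i = w j i * R j i` off the diagonal and zero diagonal. -/
noncomputable def ctmcCurrentMatrix {V : Type} [Fintype V] [DecidableEq V]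
    (R w : V → V → ℝ) : Matrix V V ℝ :=
  Matrix.of fun j i => if j = i then 0 else w j i * R j i

/-- The asymptotic average current `F = 1ᵀ C p`. -/
noncomputable def ctmcAvgCurrent {V : Type} [Fintype V] [DecidableEq V]
    (R w : V → V → ℝ) (p : V → ℝ) : ℝ :=
  (fun _ => (1 : ℝ)) ⬝ᵥ (ctmcCurrentMatrix R w *ᵥ p)

/-- The integrand `e^{Lτ} − p·1ᵀ` of the improper integral appearing in the noise. -/
noncomputable def ctmcNoiseIntegrand {V : Type} [Fintype V] [DecidableEq V]
    (R : V → V → ℝ) (p : V → ℝ) (τ : ℝ) : Matrix V V ℝ :=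
  NormedSpace.exp (τ • ctmcRateMatrix R) - Matrix.vecMulVec p (fun _ => 1)

/-- Entrywise convergence of the improper integral `∫₀^∞ (e^{Lτ} − p·1ᵀ) dτ`. -/
def ctmcNoiseConv {V : Type} [Fintype V] [DecidableEq V]
    (R : V → V → ℝ) (p : V → ℝ) : Prop :=
  ∀ j i, IntegrableOn (fun τ : ℝ => ctmcNoiseIntegrand R p τ j i) (Set.Ioi 0)

/-- The matrix `∫₀^∞ (e^{Lτ} − p·1ᵀ) dτ`, computed entrywise. -/
noncomputable def ctmcNoiseQ {V : Type} [Fintype V] [DecidableEq V]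
    (R : V → V → ℝ) (p : V → ℝ) : Matrix V V ℝ :=
  Matrix.of fun j i => ∫ τ in Set.Ioi (0 : ℝ), ctmcNoiseIntegrand R p τ j i

/-- The asymptotic noise `D = 1ᵀ C₂ p + 2·1ᵀ C (∫₀^∞ (e^{Lτ} − p·1ᵀ) dτ) C p`. -/
noncomputable def ctmcNoise {V : Type} [Fintype V] [DecidableEq V]
    (R w : V → V → ℝ) (p : V → ℝ) : ℝ :=
  (fun _ => (1 : ℝ)) ⬝ᵥ (ctmcCurrentMatrix R (fun j i => w j i ^ 2) *ᵥ p)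
    + 2 * ((fun _ => (1 : ℝ)) ⬝ᵥ (ctmcCurrentMatrix R w *ᵥ
        (ctmcNoiseQ R p *ᵥ (ctmcCurrentMatrix R w *ᵥ p))))

/-!
Let `Q = ∫₀^∞ (e^{Lτ} − p 1ᵀ) dτ`. The integrand tends to `0` and its derivative is
`e^{Lτ} L = (e^{Lτ} − p 1ᵀ) L` (columns of `L` sum to `0`), so `Q L = p 1ᵀ − I`; and `Q p = 0`
because `e^{Lτ} p = p`. Hence the potential `φ = 1ᵀ C Q` solves the Poisson equation
`φᵀ L = F 1ᵀ − 1ᵀ C`, and for the shifted weights `v j i = w j i + φ j − φ i` the current and the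
noise become the first and second moments of `v` under the stationary flux `K j i p i`:
`F = Σ K p v` and `D = Σ K p v²`. Cauchy–Schwarz then gives `F² ≤ A D` with the activity
`A = Σᵢ Γᵢ pᵢ ≤ maxᵢ Γᵢ`, and in the clockwork chain `Γ_(c,m) = Σₐ γ⁽ᵃ⁾_{cₐ}(m)`.
-/

open Set

namespace Matrix

variable {V : Type*} [Fintype V] [DecidableEq V]

theorem hasDerivAt_exp_smul_apply (L : Matrix V V ℝ) (l i : V) (τ : ℝ) :
    HasDerivAt (fun t : ℝ => NormedSpace.exp (t • L) l i)
      ((NormedSpace.exp (τ • L) * L) l i) τ := by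
  let _ : NormedRing (Matrix V V ℝ) := Matrix.linftyOpNormedRing
  let _ : NormedAlgebra ℝ (Matrix V V ℝ) := Matrix.linftyOpNormedAlgebra
  exact hasDerivAt_pi.1 (hasDerivAt_pi.1 (hasDerivAt_exp_smul_const L τ) l) i

theorem exp_smul_mulVec_of_mulVec_eq_zero {L : Matrix V V ℝ} {v : V → ℝ} (hv : L *ᵥ v = 0)
    (τ : ℝ) : NormedSpace.exp (τ • L) *ᵥ v = v := by
  ext l
  have hderiv (t : ℝ) : HasDerivAt (fun s : ℝ => (NormedSpace.exp (s • L) *ᵥ v) l) 0 t := by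
    have := HasDerivAt.fun_sum fun i (_ : i ∈ Finset.univ) =>
      (hasDerivAt_exp_smul_apply L l i t).mul_const (v i)
    have h0 : ((NormedSpace.exp (t • L) * L) *ᵥ v) l = 0 := by
      rw [← mulVec_mulVec, hv, mulVec_zero, Pi.zero_apply]
    exact h0 ▸ this
  rw [is_const_of_deriv_eq_zero (fun t => (hderiv t).differentiableAt) (fun t => (hderiv t).deriv)
    τ 0, zero_smul, NormedSpace.exp_zero, one_mulVec]

end Matrix

theorem sum_mul_sq_add_sub_of_stationary {V : Type*} [Fintype V] {K : Matrix V V ℝ}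
    {p φ : V → ℝ} {w : V → V → ℝ} {c : ℝ}
    (hstat : ∀ j, ∑ i, K j i * p i = (∑ k, K k j) * p j) (hφp : ∑ i, φ i * p i = 0)
    (hc : ∀ i, ∑ j, K j i * (w j i + φ j - φ i) = c) :
    ∑ i, ∑ j, K j i * p i * (w j i + φ j - φ i) ^ 2
      = ∑ i, ∑ j, K j i * p i * w j i ^ 2 + 2 * ∑ j, φ j * ∑ i, K j i * p i * w j i := by
  have hexpand (i j : V) : K j i * p i * (w j i + φ j - φ i) ^ 2
      = K j i * p i * w j i ^ 2 + 2 * (φ j * (K j i * p i * w j i))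
        + (φ j ^ 2 * (K j i * p i) - φ i ^ 2 * p i * K j i)
        - 2 * (φ i * p i) * (K j i * (w j i + φ j - φ i)) := by ring
  simp only [hexpand, Finset.sum_add_distrib, Finset.sum_sub_distrib, ← Finset.mul_sum, hc]
  have hquad : ∑ i, ∑ j, φ j ^ 2 * (K j i * p i) = ∑ i, φ i ^ 2 * p i * ∑ k, K k i := by
    rw [Finset.sum_comm]
    refine Finset.sum_congr rfl fun j _ => ?_
    rw [← Finset.mul_sum, hstat]
    ring
  have hlin : ∑ i, 2 * (φ i * p i) * c = 0 := by
    rw [← Finset.sum_mul, ← Finset.mul_sum, hφp, mul_zero, zero_mul]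
  rw [hquad, hlin, Finset.sum_comm (γ := V) (f := fun i j => φ j * (K j i * p i * w j i))]
  simp only [Finset.mul_sum]
  ring

section Ctmc

variable {V : Type} [DecidableEq V]

def ctmcJumpMatrix (R : V → V → ℝ) : Matrix V V ℝ :=
  of fun j i => if j = i then 0 else R j i

theorem ctmcJumpMatrix_nonneg {R : V → V → ℝ} (hR : ∀ j i, j ≠ i → 0 ≤ R j i) (j i : V) :
    0 ≤ ctmcJumpMatrix R j i := by
  by_cases h : j = i
  · simp [ctmcJumpMatrix, h]
  · simpa [ctmcJumpMatrix, h] using hR j i h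

variable [Fintype V]

def ctmcEscapeRate (R : V → V → ℝ) (i : V) : ℝ :=
  ∑ j, ctmcJumpMatrix R j i

theorem ctmcRateMatrix_eq (R : V → V → ℝ) :
    ctmcRateMatrix R = ctmcJumpMatrix R - diagonal (ctmcEscapeRate R) := by
  ext j i
  by_cases h : j = i <;> simp [ctmcRateMatrix, ctmcJumpMatrix, ctmcEscapeRate, h]

theorem one_vecMul_ctmcRateMatrix (R : V → V → ℝ) :
    (fun _ => (1 : ℝ)) ᵥ* ctmcRateMatrix R = 0 := by
  ext i
  simp [vecMul, dotProduct, ctmcRateMatrix_eq, diagonal_apply, ctmcEscapeRate,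
    Finset.sum_sub_distrib]

theorem ctmcCurrentMatrix_apply (R w : V → V → ℝ) (j i : V) :
    ctmcCurrentMatrix R w j i = w j i * ctmcJumpMatrix R j i := by
  by_cases h : j = i <;> simp [ctmcCurrentMatrix, ctmcJumpMatrix, h]

theorem ctmcAvgCurrent_eq_sum (R w : V → V → ℝ) (p : V → ℝ) :
    ctmcAvgCurrent R w p = ∑ i, ∑ j, ctmcJumpMatrix R j i * p i * w j i := by
  simp only [ctmcAvgCurrent, mulVec, dotProduct, one_mul, ctmcCurrentMatrix_apply]
  rw [Finset.sum_comm]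
  simp only [mul_comm, mul_left_comm]

variable {R : V → V → ℝ} {p : V → ℝ}

theorem ctmcJumpMatrix_mulVec_of_stationary (hpstat : ctmcRateMatrix R *ᵥ p = 0) (j : V) :
    ∑ i, ctmcJumpMatrix R j i * p i = ctmcEscapeRate R j * p j := by
  rw [ctmcRateMatrix_eq, sub_mulVec, sub_eq_zero] at hpstat
  have := congrFun hpstat j
  rwa [mulVec_diagonal] at this

theorem ctmcNoiseQ_mulVec_apply (hconv : ctmcNoiseConv R p) (v : V → ℝ) (l : V) :
    (ctmcNoiseQ R p *ᵥ v) l = ∫ τ in Ioi 0, (ctmcNoiseIntegrand R p τ *ᵥ v) l := by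
  simp only [mulVec, dotProduct, ctmcNoiseQ, of_apply]
  rw [integral_finsetSum _ fun j _ => (hconv l j).mul_const (v j)]
  simp_rw [integral_mul_const]

theorem ctmcNoiseQ_mulVec_self (hconv : ctmcNoiseConv R p) (hp1 : ∑ i, p i = 1)
    (hpstat : ctmcRateMatrix R *ᵥ p = 0) : ctmcNoiseQ R p *ᵥ p = 0 := by
  have hN (τ : ℝ) : ctmcNoiseIntegrand R p τ *ᵥ p = 0 := by
    rw [ctmcNoiseIntegrand, sub_mulVec, exp_smul_mulVec_of_mulVec_eq_zero hpstat,
      vecMulVec_mulVec]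
    simp [dotProduct, hp1]
  ext l
  simp [ctmcNoiseQ_mulVec_apply hconv, hN]

theorem ctmcNoiseQ_mul_ctmcRateMatrix (hconv : ctmcNoiseConv R p) :
    ctmcNoiseQ R p * ctmcRateMatrix R = vecMulVec p 1 - 1 := by
  set L := ctmcRateMatrix R
  ext l i
  have hderiv (τ : ℝ) : HasDerivAt (fun t => ctmcNoiseIntegrand R p t l i)
      ((ctmcNoiseIntegrand R p τ * L) l i) τ := by
    rw [ctmcNoiseIntegrand, sub_mul, vecMulVec_mul, one_vecMul_ctmcRateMatrix]
    simpa [ctmcNoiseIntegrand] using (hasDerivAt_exp_smul_apply L l i τ).sub_const (p l)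
  have hint : IntegrableOn (fun τ => (ctmcNoiseIntegrand R p τ * L) l i) (Ioi 0) := by
    simp only [mul_apply]
    exact integrable_finsetSum _ fun j _ => (hconv l j).mul_const _
  have hlim := tendsto_zero_of_hasDerivAt_of_integrableOn_Ioi (fun τ _ => hderiv τ) hint
    (hconv l i)
  have hFTC := integral_Ioi_of_hasDerivAt_of_tendsto' (fun τ _ => hderiv τ) hint hlim
  have hQL : (ctmcNoiseQ R p * L) l i = (ctmcNoiseQ R p *ᵥ fun j => L j i) l := rfl
  rw [hQL, ctmcNoiseQ_mulVec_apply hconv]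
  change ∫ τ in Ioi 0, (ctmcNoiseIntegrand R p τ * L) l i = _
  rw [hFTC]
  simp [ctmcNoiseIntegrand, vecMulVec_apply]

theorem exists_ctmcAvgCurrent_ctmcNoise_eq_moments (hp1 : ∑ i, p i = 1)
    (hpstat : ctmcRateMatrix R *ᵥ p = 0) (hconv : ctmcNoiseConv R p) (w : V → V → ℝ) :
    ∃ v : V → V → ℝ,
      ctmcAvgCurrent R w p = ∑ i, ∑ j, ctmcJumpMatrix R j i * p i * v j i ∧
      ctmcNoise R w p = ∑ i, ∑ j, ctmcJumpMatrix R j i * p i * v j i ^ 2 := by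
  set K := ctmcJumpMatrix R
  set F := ctmcAvgCurrent R w p
  set u : V → ℝ := (fun _ => (1 : ℝ)) ᵥ* ctmcCurrentMatrix R w
  set φ : V → ℝ := u ᵥ* ctmcNoiseQ R p
  have hφp : ∑ i, φ i * p i = 0 := by
    have : φ ⬝ᵥ p = 0 := by
      rw [← dotProduct_mulVec, ctmcNoiseQ_mulVec_self hconv hp1 hpstat, dotProduct_zero]
    simpa [dotProduct] using this
  have huF : u ⬝ᵥ p = F := by rw [← dotProduct_mulVec]; rfl
  have hφL : φ ᵥ* ctmcRateMatrix R = fun i => F - u i := by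
    rw [vecMul_vecMul, ctmcNoiseQ_mul_ctmcRateMatrix hconv, vecMul_sub, vecMul_vecMulVec,
      vecMul_one, huF]
    ext i
    simp
  have hc (i : V) : ∑ j, K j i * (w j i + φ j - φ i) = F := by
    have hφLi := congrFun hφL i
    rw [ctmcRateMatrix_eq, vecMul_sub, Pi.sub_apply, vecMul_diagonal] at hφLi
    have hsplit : ∑ j, K j i * (w j i + φ j - φ i)
        = u i + (φ ᵥ* K) i - φ i * ctmcEscapeRate R i := by
      simp only [u, vecMul, dotProduct, ctmcCurrentMatrix_apply, ctmcEscapeRate, Finset.mul_sum,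
        ← Finset.sum_add_distrib, ← Finset.sum_sub_distrib]
      exact Finset.sum_congr rfl fun j _ => by ring
    linarith
  refine ⟨fun j i => w j i + φ j - φ i, ?_, ?_⟩
  · calc F = ∑ i, p i * F := by rw [← Finset.sum_mul, hp1, one_mul]
      _ = _ := Finset.sum_congr rfl fun i _ => by
        rw [← hc i, Finset.mul_sum]
        exact Finset.sum_congr rfl fun j _ => by ring
  · rw [sum_mul_sq_add_sub_of_stationary (ctmcJumpMatrix_mulVec_of_stationary hpstat) hφp hc]
    have hφC : (fun _ => (1 : ℝ)) ⬝ᵥ (ctmcCurrentMatrix R w *ᵥ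
        (ctmcNoiseQ R p *ᵥ (ctmcCurrentMatrix R w *ᵥ p))) = φ ⬝ᵥ (ctmcCurrentMatrix R w *ᵥ p) := by
      rw [dotProduct_mulVec, dotProduct_mulVec]
    rw [ctmcNoise, ← ctmcAvgCurrent, ctmcAvgCurrent_eq_sum, hφC]
    simp only [dotProduct, mulVec, ctmcCurrentMatrix_apply]
    congr 2
    exact Finset.sum_congr rfl fun j _ =>
      congrArg (φ j * ·) (Finset.sum_congr rfl fun i _ => by ring)

theorem ctmcNoise_nonneg (hR : ∀ j i, j ≠ i → 0 ≤ R j i) (hp0 : ∀ i, 0 ≤ p i)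
    (hp1 : ∑ i, p i = 1) (hpstat : ctmcRateMatrix R *ᵥ p = 0) (hconv : ctmcNoiseConv R p)
    (w : V → V → ℝ) : 0 ≤ ctmcNoise R w p := by
  obtain ⟨v, -, hD⟩ := exists_ctmcAvgCurrent_ctmcNoise_eq_moments hp1 hpstat hconv w
  rw [hD]
  exact Finset.sum_nonneg fun i _ => Finset.sum_nonneg fun j _ =>
    mul_nonneg (mul_nonneg (ctmcJumpMatrix_nonneg hR j i) (hp0 i)) (sq_nonneg _)

/-- The kinetic uncertainty relation. -/
theorem sq_ctmcAvgCurrent_le_mul_ctmcNoise (hR : ∀ j i, j ≠ i → 0 ≤ R j i)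
    (hp0 : ∀ i, 0 ≤ p i) (hp1 : ∑ i, p i = 1) (hpstat : ctmcRateMatrix R *ᵥ p = 0)
    (hconv : ctmcNoiseConv R p) (w : V → V → ℝ) :
    ctmcAvgCurrent R w p ^ 2 ≤ (∑ i, ctmcEscapeRate R i * p i) * ctmcNoise R w p := by
  obtain ⟨v, hF, hD⟩ := exists_ctmcAvgCurrent_ctmcNoise_eq_moments hp1 hpstat hconv w
  have hflux (x : V × V) : 0 ≤ ctmcJumpMatrix R x.2 x.1 * p x.1 :=
    mul_nonneg (ctmcJumpMatrix_nonneg hR _ _) (hp0 _)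
  have hCS := Finset.sum_sq_le_sum_mul_sum_of_sq_le_mul Finset.univ
    (r := fun x : V × V => ctmcJumpMatrix R x.2 x.1 * p x.1 * v x.2 x.1)
    (fun x _ => hflux x) (fun x _ => mul_nonneg (hflux x) (sq_nonneg (v x.2 x.1)))
    (fun x _ => (by ring : _ = _).le)
  simp only [Fintype.sum_prod_type] at hCS
  simpa only [hF, hD, ctmcEscapeRate, Finset.sum_mul] using hCS

end Ctmc

theorem ctmcEscapeRate_clockwork {G : ℕ} {M : Type} [Fintype M] [DecidableEq M]
    {γ : Fin G → M → Bool → ℝ} {u : M → Fin G → Bool → M}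
    {R : ((Fin G → Bool) × M) → ((Fin G → Bool) × M) → ℝ}
    (hR : ∀ x' x : (Fin G → Bool) × M, R x' x =
      ∑ a : Fin G,
        if x'.1 = Function.update x.1 a (!(x.1 a)) ∧ x'.2 = u x.2 a (x.1 a)
        then γ a x.2 (x.1 a) else 0)
    (x : (Fin G → Bool) × M) : ctmcEscapeRate R x = ∑ a, γ a x.2 (x.1 a) := by
  have hdiag : R x x = 0 := by
    rw [hR]
    refine Finset.sum_eq_zero fun a _ => if_neg ?_
    rintro ⟨h, -⟩
    simpa using congrFun h a
  have hjump (k : (Fin G → Bool) × M) : ctmcJumpMatrix R k x = R k x := by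
    by_cases h : k = x
    · simp [ctmcJumpMatrix, h, hdiag]
    · simp [ctmcJumpMatrix, h]
  simp only [ctmcEscapeRate, hjump, hR]
  rw [Finset.sum_comm]
  simp [ite_and, Fintype.sum_prod_type]

theorem classical_snr_bound_general
    (G : ℕ)
    (M : Type) [Fintype M] [DecidableEq M] [Nonempty M]
    (Jt : Set ℝ) (hJtsub : Jt ⊆ Set.Ici 0)
    (γ : Fin G → M → Bool → ℝ) (hγ : ∀ a m i, γ a m i ∈ Jt)
    (u : M → Fin G → Bool → M)
    -- the jump rates of the chain on `{0,1}^G × M`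
    (R : ((Fin G → Bool) × M) → ((Fin G → Bool) × M) → ℝ)
    (hR : ∀ x' x : (Fin G → Bool) × M, R x' x =
      ∑ a : Fin G,
        if x'.1 = Function.update x.1 a (!(x.1 a)) ∧ x'.2 = u x.2 a (x.1 a)
        then γ a x.2 (x.1 a) else 0)
    -- a stationary distribution
    (p : ((Fin G → Bool) × M) → ℝ)
    (hp0 : ∀ x, 0 ≤ p x) (hp1 : ∑ x, p x = 1)
    (hpstat : ctmcRateMatrix R *ᵥ p = 0)
    -- arbitrary real weights on the jumps
    (w : ((Fin G → Bool) × M) → ((Fin G → Bool) × M) → ℝ)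
    -- convergence of the improper integral defining the noise
    (hconv : ctmcNoiseConv R p) :
    ctmcAvgCurrent R w p ^ 2 / ctmcNoise R w p ≤
      Finset.univ.sup' Finset.univ_nonempty
        (fun mi : M × (Fin G → Bool) => ∑ a, γ a mi.1 (mi.2 a)) := by
  set S := Finset.univ.sup' Finset.univ_nonempty
    (fun mi : M × (Fin G → Bool) => ∑ a, γ a mi.1 (mi.2 a))
  have hRnn (x' x : (Fin G → Bool) × M) (_ : x' ≠ x) : 0 ≤ R x' x := by
    rw [hR]
    exact Finset.sum_nonneg fun a _ => by
      split_ifs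
      exacts [hJtsub (hγ a x.2 (x.1 a)), le_rfl]
  have hΓ (x : (Fin G → Bool) × M) : ctmcEscapeRate R x ≤ S := by
    rw [ctmcEscapeRate_clockwork hR]
    exact Finset.le_sup' (fun mi : M × (Fin G → Bool) => ∑ a, γ a mi.1 (mi.2 a))
      (Finset.mem_univ (x.2, x.1))
  have hS : 0 ≤ S := (Finset.sum_nonneg fun j _ => ctmcJumpMatrix_nonneg hRnn j _).trans
    (hΓ (Classical.arbitrary _))
  have hactivity : ∑ x, ctmcEscapeRate R x * p x ≤ S :=
    calc ∑ x, ctmcEscapeRate R x * p x ≤ ∑ x, S * p x :=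
          Finset.sum_le_sum fun x _ => mul_le_mul_of_nonneg_right (hΓ x) (hp0 x)
      _ = S := by rw [← Finset.mul_sum, hp1, mul_one]
  have hD := ctmcNoise_nonneg hRnn hp0 hp1 hpstat hconv w
  refine div_le_of_le_mul₀ hD hS ?_
  calc ctmcAvgCurrent R w p ^ 2
      ≤ (∑ x, ctmcEscapeRate R x * p x) * ctmcNoise R w p :=
        sq_ctmcAvgCurrent_le_mul_ctmcNoise hRnn hp0 hp1 hpstat hconv w
    _ ≤ S * ctmcNoise R w p := mul_le_mul_of_nonneg_right hactivity hD

/-- **Theorem 1 (classical no-go bound).**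
For `G ≥ 1` two-dimensional classical clockworks controlled by a feedback policy with finite
nonempty memory `M`, allowed rates in a nonempty set `J̃ ⊆ [0,∞)`, parameter-update functions
`γ⁽ᵃ⁾ : M → J̃ × J̃` and an arbitrary memory-update function `u`, consider the continuous-time
Markov chain on `{0,1}^G × M` whose only jumps are `(c,m) → (c ⊕ eₐ, u(m,a,cₐ))` at rate
`γ⁽ᵃ⁾_{cₐ}(m)`. For any stationary distribution `p`, any real weights `w` on the jumps and the
resulting asymptotic average current `F`, noise `D > 0` (with the noise integral convergent
entrywise) and signal-to-noise ratio `S = F²/D`, one has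
`S ≤ max_{m∈M} max_{i∈{0,1}^G} Σₐ γ⁽ᵃ⁾_{iₐ}(m)`. -/
theorem classical_snr_bound
    (G : ℕ) (hG : 1 ≤ G)
    (M : Type) [Fintype M] [DecidableEq M] [Nonempty M]
    (Jt : Set ℝ) (hJtne : Jt.Nonempty) (hJtsub : Jt ⊆ Set.Ici 0)
    (γ : Fin G → M → Bool → ℝ) (hγ : ∀ a m i, γ a m i ∈ Jt)
    (u : M → Fin G → Bool → M)
    -- the jump rates of the chain on `{0,1}^G × M`
    (R : ((Fin G → Bool) × M) → ((Fin G → Bool) × M) → ℝ)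
    (hR : ∀ x' x : (Fin G → Bool) × M, R x' x =
      ∑ a : Fin G,
        if x'.1 = Function.update x.1 a (!(x.1 a)) ∧ x'.2 = u x.2 a (x.1 a)
        then γ a x.2 (x.1 a) else 0)
    -- a stationary distribution
    (p : ((Fin G → Bool) × M) → ℝ)
    (hp0 : ∀ x, 0 ≤ p x) (hp1 : ∑ x, p x = 1)
    (hpstat : ctmcRateMatrix R *ᵥ p = 0)
    -- arbitrary real weights on the jumps
    (w : ((Fin G → Bool) × M) → ((Fin G → Bool) × M) → ℝ)
    -- convergence of the improper integral defining the noise, and positivity of the noise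
    (hconv : ctmcNoiseConv R p)
    (hD : 0 < ctmcNoise R w p) :
    ctmcAvgCurrent R w p ^ 2 / ctmcNoise R w p ≤
      Finset.univ.sup' Finset.univ_nonempty
        (fun mi : M × (Fin G → Bool) => ∑ a, γ a mi.1 (mi.2 a)) :=
  classical_snr_bound_general G M Jt hJtsub γ hγ u R hR p hp0 hp1 hpstat w hconv
end

section
/- Let A ∈ ℂ^{N×N} and suppose there exist vectors v, w ∈ ℂ^N with A·v = 0, wᴴ·A = 0 and wᴴ·v = 1, that the kernel of A is one-dimensional and equals the kernel of A² (so ker(A²) = ker(A) = span{v}), and that every nonzero eigenvalue of A has strictly negative real part. Then the improper integral A⁺ := ∫₀^∞ (v·wᴴ − e^{Aτ}) dτ converges entrywise, and A⁺ is the group inverse of A, i.e., A·A⁺·A = A, A⁺·A·A⁺ = A⁺ and A·A⁺ = A⁺·A. -/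
/-!
Put `P = v wᴴ` and `B = A - P`. Then `P` is an idempotent with `AP = PA = 0`, so
`e^{τA} = e^{τB} + (1 - e^{-τ}) P`. The eigenvalues of `B` are those of `A`, except that the
simple eigenvalue `0` (with eigenvector `v`) becomes `-1`; hence `B` is invertible and
`σ(e^B) = e^{σ(B)}` lies in the open unit disc. By Gelfand's formula `‖e^{nB}‖` decays
geometrically, so `∫₀^∞ e^{τB} dτ = -B⁻¹` and `A⁺ = P + B⁻¹`, which is a group inverse of `A`
by a purely algebraic computation.
-/

open Matrix MeasureTheory

/-- The improper integral `A⁺ = ∫₀^∞ (v·wᴴ − e^{Aτ}) dτ`, computed entrywise. -/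
noncomputable def groupInverseIntegral {N : Type} [Fintype N] [DecidableEq N]
    (A : Matrix N N ℂ) (v w : N → ℂ) : Matrix N N ℂ :=
  Matrix.of fun i j =>
    ∫ τ in Set.Ioi (0 : ℝ), (Matrix.vecMulVec v (star w) - NormedSpace.exp ((τ : ℂ) • A)) i j

open NormedSpace Filter Set Asymptotics Topology Polynomial

def IsGroupInverse {R : Type*} [Mul R] (a b : R) : Prop :=
  a * b * a = a ∧ b * a * b = b ∧ a * b = b * a

theorem isGroupInverse_add_of_isIdempotentElem {R : Type*} [Ring R] {a p b : R}
    (hp : IsIdempotentElem p) (hap : a * p = 0) (hpa : p * a = 0) (hb : b * (a - p) = 1)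
    (hb' : (a - p) * b = 1) : IsGroupInverse a (p + b) := by
  have hpb : p * b = -p :=
    calc p * b = -(p * (a - p)) * b := by rw [mul_sub, hpa, hp.eq, zero_sub, neg_neg]
      _ = -p := by rw [neg_mul, mul_assoc, hb', mul_one]
  have hbp : b * p = -p :=
    calc b * p = -(b * ((a - p) * p)) := by rw [sub_mul, hap, hp.eq, zero_sub, mul_neg, neg_neg]
      _ = -p := by rw [← mul_assoc, hb, one_mul]
  have hleft : a * (p + b) = 1 - p :=
    calc a * (p + b) = a * p + (a - p) * b + p * b := by noncomm_ring
      _ = 1 - p := by rw [hap, hb', hpb]; abel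
  have hright : (p + b) * a = 1 - p :=
    calc (p + b) * a = p * a + b * (a - p) + b * p := by noncomm_ring
      _ = 1 - p := by rw [hpa, hb, hbp]; abel
  refine ⟨?_, ?_, hleft.trans hright.symm⟩
  · rw [hleft, sub_mul, one_mul, hpa, sub_zero]
  · rw [hright, sub_mul, one_mul, mul_add, hp.eq, hpb]
    abel

theorem isUnit_of_forall_mem_spectrum_re_neg {𝔸 : Type*} [Ring 𝔸] [Algebra ℂ 𝔸] {a : 𝔸}
    (h : ∀ μ ∈ spectrum ℂ a, μ.re < 0) : IsUnit a := by
  by_contra ha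
  simpa using h 0 ((spectrum.zero_mem_iff ℂ).2 ha)

section Eigen
variable {K R : Type*} [CommSemiring K] [Semiring R] [Algebra K R] {x q : R} {c : K}

theorem pow_mul_eq_smul_of_mul_eq_smul (h : x * q = c • q) (n : ℕ) : x ^ n * q = c ^ n • q := by
  induction n with
  | zero => simp
  | succ n ih => rw [pow_succ, mul_assoc, h, mul_smul_comm, ih, smul_smul, pow_succ']

theorem aeval_mul_eq_smul_of_mul_eq_smul (h : x * q = c • q) (p : K[X]) :
    aeval x p * q = p.eval c • q := by
  induction p using Polynomial.induction_on' with
  | add p₁ p₂ h₁ h₂ => rw [map_add, add_mul, h₁, h₂, eval_add, add_smul]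
  | monomial n k =>
    rw [aeval_monomial, eval_monomial, Algebra.algebraMap_eq_smul_one, smul_mul_assoc, one_mul,
      smul_mul_assoc, pow_mul_eq_smul_of_mul_eq_smul h, smul_smul]

end Eigen

section BanachAlgebra
variable {𝔸 : Type*} [NormedRing 𝔸] [NormedAlgebra ℂ 𝔸] [CompleteSpace 𝔸]

theorem exp_mul_eq_smul_of_mul_eq_smul {x q : 𝔸} {c : ℂ} (h : x * q = c • q) :
    exp x * q = Complex.exp c • q := by
  rw [exp_eq_tsum ℂ, ← (expSeries_summable' x).tsum_mul_right, Complex.exp_eq_exp_ℂ,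
    exp_eq_tsum ℂ, ← (expSeries_summable' c).tsum_smul_const]
  simp only [smul_mul_assoc, pow_mul_eq_smul_of_mul_eq_smul h, smul_smul, smul_eq_mul]

theorem exp_smul_eq_of_isIdempotentElem {a p : 𝔸} (hp : IsIdempotentElem p) (hap : a * p = 0)
    (hpa : p * a = 0) (t : ℂ) :
    exp (t • a) = exp (t • (a - p)) + p - Complex.exp (-t) • p := by
  have hbp : t • (a - p) * p = (-t) • p := by
    rw [smul_mul_assoc, sub_mul, hap, hp.eq, zero_sub, smul_neg, neg_smul]
  have hcomm : Commute (t • (a - p)) (t • p) := by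
    refine ((Commute.sub_left ?_ (Commute.refl p)).smul_left t).smul_right t
    rw [Commute, SemiconjBy, hap, hpa]
  have hp_compl : t • p * (1 - p) = (0 : ℂ) • (1 - p) := by
    rw [smul_mul_assoc, mul_sub, mul_one, hp.eq, sub_self, smul_zero, zero_smul]
  have hexp_p : exp (t • p) = 1 - p + Complex.exp t • p := by
    have h1 := exp_mul_eq_smul_of_mul_eq_smul hp_compl
    have h2 := exp_mul_eq_smul_of_mul_eq_smul (x := t • p) (q := p) (c := t)
      (by rw [smul_mul_assoc, hp.eq])
    rw [Complex.exp_zero, one_smul] at h1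
    calc exp (t • p) = exp (t • p) * (1 - p) + exp (t • p) * p := by noncomm_ring
      _ = _ := by rw [h1, h2]
  calc exp (t • a) = exp (t • (a - p) + t • p) := by rw [← smul_add, sub_add_cancel]
    _ = exp (t • (a - p)) * exp (t • p) :=
      -- the addition formula for `exp` is stated for normed `ℚ`-algebras
      let := NormedAlgebra.restrictScalars ℚ ℂ 𝔸
      NormedSpace.exp_add_of_commute hcomm
    _ = exp (t • (a - p)) * (1 - p) + Complex.exp t • (exp (t • (a - p)) * p) := by
      rw [hexp_p, mul_add, mul_smul_comm]
    _ = _ := by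
      rw [exp_mul_eq_smul_of_mul_eq_smul hbp, smul_smul, ← Complex.exp_add, add_neg_cancel,
        Complex.exp_zero, one_smul, mul_sub, mul_one, exp_mul_eq_smul_of_mul_eq_smul hbp]
      abel

theorem exists_eventually_norm_pow_le_geometric {a : 𝔸} (h : spectralRadius ℂ a < 1) :
    ∃ r : ℝ, 0 < r ∧ r < 1 ∧ ∀ᶠ n : ℕ in atTop, ‖a ^ n‖ ≤ r ^ n := by
  obtain ⟨r, hρr, hr1⟩ := ENNReal.lt_iff_exists_nnreal_btwn.1 h
  have hr0 : 0 < r := ENNReal.coe_pos.1 (hρr.trans_le' bot_le)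
  refine ⟨r, hr0, by exact_mod_cast hr1, ?_⟩
  filter_upwards [(spectrum.pow_norm_pow_one_div_tendsto_nhds_spectralRadius a).eventually
    (gt_mem_nhds hρr), eventually_ge_atTop 1] with n hn hn1
  rw [ENNReal.ofReal_lt_iff_lt_toReal (by positivity) ENNReal.coe_ne_top, ENNReal.coe_toReal,
    one_div, Real.rpow_inv_lt_iff_of_pos (norm_nonneg _) r.coe_nonneg (by positivity),
    Real.rpow_natCast] at hn
  exact hn.le

theorem isBigO_exp_smul_atTop {a : 𝔸} (h : spectralRadius ℂ (exp a) < 1) :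
    ∃ δ > 0, (fun τ : ℝ => exp ((τ : ℂ) • a)) =O[atTop] fun τ => Real.exp (-δ * τ) := by
  let := NormedAlgebra.restrictScalars ℚ ℂ 𝔸
  obtain ⟨r, hr0, hr1, hr⟩ := exists_eventually_norm_pow_le_geometric h
  obtain ⟨N, hN⟩ := eventually_atTop.1 hr
  obtain ⟨M, hM⟩ : ∃ M, ∀ s ∈ Icc (0 : ℝ) 1, ‖exp ((s : ℂ) • a)‖ ≤ M :=
    isCompact_Icc.exists_bound_of_continuousOn (by fun_prop)
  have hM0 : 0 ≤ M := (norm_nonneg _).trans (hM 0 ⟨le_rfl, zero_le_one⟩)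
  set δ := -Real.log r
  have hδ : 0 < δ := neg_pos.2 (Real.log_neg hr0 hr1)
  refine ⟨δ, hδ, IsBigO.of_bound (M * Real.exp δ) ?_⟩
  filter_upwards [eventually_ge_atTop (N : ℝ), eventually_ge_atTop 0] with τ hτN hτ0
  set n := ⌊τ⌋₊
  have hs : τ - n ∈ Icc (0 : ℝ) 1 :=
    ⟨sub_nonneg.2 (Nat.floor_le hτ0), by linarith [Nat.lt_floor_add_one τ]⟩
  have hsplit : exp ((τ : ℂ) • a) = exp (((τ - n : ℝ) : ℂ) • a) * exp a ^ n := by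
    rw [← NormedSpace.exp_nsmul, ← Nat.cast_smul_eq_nsmul ℂ,
      ← NormedSpace.exp_add_of_commute (((Commute.refl a).smul_left _).smul_right _), ← add_smul]
    push_cast
    ring_nf
  have hrn : r ^ n = Real.exp (-δ * n) := by
    rw [neg_neg, mul_comm, ← Real.log_pow, Real.exp_log (by positivity)]
  rw [hsplit, Real.norm_of_nonneg (Real.exp_pos _).le]
  calc ‖exp (((τ - n : ℝ) : ℂ) • a) * exp a ^ n‖
      ≤ M * r ^ n := (norm_mul_le _ _).trans
        (mul_le_mul (hM _ hs) (hN n (Nat.le_floor hτN)) (norm_nonneg _) hM0)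
    _ ≤ M * Real.exp (-δ * (τ - 1)) := by
      rw [hrn]
      gcongr M * Real.exp ?_
      nlinarith [Nat.lt_floor_add_one τ]
    _ = M * Real.exp δ * Real.exp (-δ * τ) := by
      rw [mul_assoc, ← Real.exp_add]
      ring_nf

section
variable {a : 𝔸} {δ : ℝ} (hδ : 0 < δ)
  (hdecay : (fun τ : ℝ => exp ((τ : ℂ) • a)) =O[atTop] fun τ => Real.exp (-δ * τ))
include hδ hdecay

theorem integrableOn_Ioi_exp_smul :
    IntegrableOn (fun τ : ℝ => exp ((τ : ℂ) • a)) (Ioi 0) :=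
  let := NormedAlgebra.restrictScalars ℚ ℂ 𝔸
  (integrableOn_Ici_iff_integrableOn_Ioi (by finiteness)).mp <|
    ((by fun_prop : Continuous fun τ : ℝ => exp ((τ : ℂ) • a)).continuousOn.locallyIntegrableOn
      measurableSet_Ici).integrableOn_of_isBigO_atTop hdecay
      ⟨Ioi 0, Ioi_mem_atTop 0, exp_neg_integrableOn_Ioi 0 hδ⟩

theorem integral_Ioi_exp_smul {b : 𝔸} (hba : b * a = 1) :
    ∫ τ in Ioi (0 : ℝ), exp ((τ : ℂ) • a) = -b := by
  have hderiv : ∀ t ∈ Ici (0 : ℝ),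
      HasDerivAt (fun τ : ℝ => b * exp ((τ : ℂ) • a)) (exp ((t : ℂ) • a)) t := by
    intro t _
    have := ((hasDerivAt_exp_smul_const' (𝕂 := ℂ) a t).scomp t
      Complex.ofRealCLM.hasDerivAt).const_mul b
    simpa [← mul_assoc, hba] using this
  have hlim : Tendsto (fun τ : ℝ => b * exp ((τ : ℂ) • a)) atTop (𝓝 0) := by
    have := hdecay.trans_tendsto
      (Real.tendsto_exp_atBot.comp (tendsto_id.const_mul_atTop_of_neg (neg_neg_of_pos hδ)))
    simpa using this.const_mul b
  rw [integral_Ioi_of_hasDerivAt_of_tendsto' hderiv (integrableOn_Ioi_exp_smul hδ hdecay) hlim]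
  simp
end

end BanachAlgebra

namespace Matrix
variable {n : Type*} [Fintype n] [DecidableEq n]

theorem exists_mulVec_eq_smul_of_mem_spectrum {K : Type*} [Field K] {B : Matrix n n K} {μ : K}
    (hμ : μ ∈ spectrum K B) : ∃ x ≠ 0, B *ᵥ x = μ • x := by
  rw [← spectrum_toLin', ← Module.End.hasEigenvalue_iff_mem_spectrum] at hμ
  obtain ⟨x, hx⟩ := hμ.exists_hasEigenvector
  exact ⟨x, hx.2, by simpa using hx.apply_eq_smul⟩

theorem exp_mem_adjoin (B : Matrix n n ℂ) : exp B ∈ Algebra.adjoin ℂ {B} :=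
  exp_mem (R := ℂ) (s := Algebra.adjoin ℂ {B})
    (Subalgebra.toSubmodule (Algebra.adjoin ℂ {B})).closed_of_finiteDimensional
    (Algebra.self_mem_adjoin_singleton ℂ B)

section
-- an auxiliary Banach-algebra norm; no statement below depends on the choice
attribute [local instance] Matrix.linftyOpNormedRing Matrix.linftyOpNormedAlgebra

/- `exp B` is a polynomial `p(B)`; testing `p(B)` and `exp B` on the rank-one matrix `x xᵀ` built
from an eigenvector shows that `p` agrees with `Complex.exp` on `σ(B)`. -/
theorem spectrum_exp_subset (B : Matrix n n ℂ) :
    spectrum ℂ (exp B) ⊆ Complex.exp '' spectrum ℂ B := by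
  nontriviality Matrix n n ℂ
  intro k hk
  obtain ⟨p, hp⟩ : ∃ p : ℂ[X], aeval B p = exp B := by
    simpa [Algebra.adjoin_singleton_eq_range_aeval] using exp_mem_adjoin B
  rw [← hp, spectrum.map_polynomial_aeval_of_nonempty _ _
    (spectrum.nonempty_of_isAlgClosed_of_finiteDimensional ℂ B)] at hk
  obtain ⟨μ, hμ, rfl⟩ := hk
  refine ⟨μ, hμ, ?_⟩
  obtain ⟨x, hx0, hx⟩ := exists_mulVec_eq_smul_of_mem_spectrum hμ
  have hBq : B * vecMulVec x x = μ • vecMulVec x x := by rw [mul_vecMulVec, hx, smul_vecMulVec]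
  have hq : vecMulVec x x ≠ 0 := by simpa using hx0
  refine smul_left_injective ℂ hq ?_
  dsimp only
  calc Complex.exp μ • vecMulVec x x = exp B * vecMulVec x x :=
        (exp_mul_eq_smul_of_mul_eq_smul hBq).symm
    _ = p.eval μ • vecMulVec x x := by rw [← hp, aeval_mul_eq_smul_of_mul_eq_smul hBq]

theorem spectralRadius_exp_lt_one {B : Matrix n n ℂ} (hB : ∀ μ ∈ spectrum ℂ B, μ.re < 0) :
    spectralRadius ℂ (exp B) < 1 := by
  nontriviality Matrix n n ℂ
  refine spectrum.spectralRadius_lt_of_forall_lt _ fun k hk => ?_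
  obtain ⟨μ, hμ, rfl⟩ := spectrum_exp_subset B hk
  rw [← NNReal.coe_lt_coe, coe_nnnorm, Complex.norm_exp, NNReal.coe_one, Real.exp_lt_one_iff]
  exact hB μ hμ

section
variable {B : Matrix n n ℂ} (hB : ∀ μ ∈ spectrum ℂ B, μ.re < 0)
include hB

theorem integrableOn_Ioi_exp_smul_apply (i j : n) :
    IntegrableOn (fun τ : ℝ => exp ((τ : ℂ) • B) i j) (Ioi 0) := by
  obtain ⟨δ, hδ, hdecay⟩ := isBigO_exp_smul_atTop (a := B) (spectralRadius_exp_lt_one hB)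
  exact (entryLinearMap ℂ ℂ i j).toContinuousLinearMap.integrable_comp
    (integrableOn_Ioi_exp_smul hδ hdecay)

theorem integral_Ioi_exp_smul_apply (i j : n) :
    ∫ τ in Ioi (0 : ℝ), exp ((τ : ℂ) • B) i j = -B⁻¹ i j := by
  obtain ⟨δ, hδ, hdecay⟩ := isBigO_exp_smul_atTop (a := B) (spectralRadius_exp_lt_one hB)
  have hinv : B⁻¹ * B = 1 :=
    nonsing_inv_mul B ((isUnit_iff_isUnit_det B).1 (isUnit_of_forall_mem_spectrum_re_neg hB))
  have := (entryLinearMap ℂ ℂ i j).toContinuousLinearMap.integral_comp_comm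
    (integrableOn_Ioi_exp_smul hδ hdecay)
  rwa [integral_Ioi_exp_smul hδ hdecay hinv] at this

end

theorem integral_Ioi_sub_exp_smul_apply {A P : Matrix n n ℂ} (hP : IsIdempotentElem P)
    (hAP : A * P = 0) (hPA : P * A = 0) (hB : ∀ μ ∈ spectrum ℂ (A - P), μ.re < 0) (i j : n) :
    IntegrableOn (fun τ : ℝ => (P - exp ((τ : ℂ) • A)) i j) (Ioi 0) ∧
      ∫ τ in Ioi (0 : ℝ), (P - exp ((τ : ℂ) • A)) i j = (P + (A - P)⁻¹) i j := by
  have hfun : (fun τ : ℝ => (P - exp ((τ : ℂ) • A)) i j) =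
      fun τ : ℝ => Complex.exp (-1 * τ) * P i j - exp ((τ : ℂ) • (A - P)) i j := by
    funext τ
    have hexp : exp ((τ : ℂ) • A) = exp ((τ : ℂ) • (A - P)) + P - Complex.exp (-τ) • P :=
      exp_smul_eq_of_isIdempotentElem hP hAP hPA _
    rw [hexp]
    simp only [sub_apply, add_apply, smul_apply, smul_eq_mul, neg_one_mul]
    ring
  have hint₁ := (integrableOn_exp_mul_complex_Ioi (a := -1) (by simp) 0).mul_const (P i j)
  have hint₂ := integrableOn_Ioi_exp_smul_apply hB i j
  rw [hfun]
  refine ⟨hint₁.sub hint₂, ?_⟩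
  rw [integral_sub hint₁ hint₂, integral_mul_const, integral_exp_mul_complex_Ioi (by simp) 0,
    integral_Ioi_exp_smul_apply hB]
  simp

end

end Matrix

theorem re_neg_of_mem_spectrum_sub_vecMulVec {n : Type*} [Fintype n] [DecidableEq n]
    {A : Matrix n n ℂ} {u v : n → ℂ} (hu : u ᵥ* A = 0) (huv : u ⬝ᵥ v = 1)
    (hker : ∀ x : n → ℂ, A *ᵥ x = 0 → ∃ c : ℂ, x = c • v)
    (heig : ∀ μ : ℂ, μ ≠ 0 → (∃ x : n → ℂ, x ≠ 0 ∧ A *ᵥ x = μ • x) → μ.re < 0) :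
    ∀ μ ∈ spectrum ℂ (A - vecMulVec v u), μ.re < 0 := by
  intro μ hμ
  obtain ⟨x, hx0, hx⟩ := exists_mulVec_eq_smul_of_mem_spectrum hμ
  have hAx : A *ᵥ x = μ • x + (u ⬝ᵥ x) • v := by
    rw [sub_mulVec, vecMulVec_mulVec, op_smul_eq_smul, sub_eq_iff_eq_add] at hx
    exact hx
  have hcoef : (μ + 1) * (u ⬝ᵥ x) = 0 := by
    have := congrArg (u ⬝ᵥ ·) hAx
    simp only [dotProduct_mulVec, hu, zero_dotProduct, dotProduct_add, dotProduct_smul, huv,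
      smul_eq_mul] at this
    linear_combination -this
  rcases mul_eq_zero.1 hcoef with hμ1 | hux
  · rw [eq_neg_of_add_eq_zero_left hμ1]
    norm_num
  rw [hux, zero_smul, add_zero] at hAx
  by_cases hμ0 : μ = 0
  · obtain ⟨c, rfl⟩ := hker x (by rw [hAx, hμ0, zero_smul])
    rw [dotProduct_smul, huv, smul_eq_mul, mul_one] at hux
    simp [hux] at hx0
  · exact heig μ hμ0 ⟨x, hx0, hAx⟩

theorem groupInverse_integral_general
    {N : Type} [Fintype N] [DecidableEq N]
    (A : Matrix N N ℂ) (v w : N → ℂ)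
    (hv : A *ᵥ v = 0) (hw : Matrix.vecMul (star w) A = 0) (hwv : star w ⬝ᵥ v = 1)
    (hker : ∀ x : N → ℂ, A *ᵥ x = 0 → ∃ c : ℂ, x = c • v)
    (heig : ∀ μ : ℂ, μ ≠ 0 → (∃ x : N → ℂ, x ≠ 0 ∧ A *ᵥ x = μ • x) → μ.re < 0) :
    (∀ i j, IntegrableOn
        (fun τ : ℝ => (Matrix.vecMulVec v (star w) - NormedSpace.exp ((τ : ℂ) • A)) i j)
        (Set.Ioi 0))
    ∧ A * groupInverseIntegral A v w * A = A
    ∧ groupInverseIntegral A v w * A * groupInverseIntegral A v w = groupInverseIntegral A v w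
    ∧ A * groupInverseIntegral A v w = groupInverseIntegral A v w * A := by
  set P := vecMulVec v (star w)
  have hP : IsIdempotentElem P := by
    rw [IsIdempotentElem, vecMulVec_mul_vecMulVec, hwv, one_smul]
  have hAP : A * P = 0 := by rw [mul_vecMulVec, hv, zero_vecMulVec]
  have hPA : P * A = 0 := by rw [vecMulVec_mul, hw, vecMulVec_zero]
  have hB := re_neg_of_mem_spectrum_sub_vecMulVec hw hwv hker heig
  have hint := integral_Ioi_sub_exp_smul_apply hP hAP hPA hB
  have hG : groupInverseIntegral A v w = P + (A - P)⁻¹ := ext fun i j => (hint i j).2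
  have hdet := (isUnit_iff_isUnit_det _).1 (isUnit_of_forall_mem_spectrum_re_neg hB)
  rw [hG]
  exact ⟨fun i j => (hint i j).1, isGroupInverse_add_of_isIdempotentElem hP hAP hPA
    (nonsing_inv_mul _ hdet) (mul_nonsing_inv _ hdet)⟩

/-- **The integral `∫₀^∞ (v·wᴴ − e^{Aτ}) dτ` is the group inverse.** Suppose `A ∈ ℂ^{N×N}`
admits vectors `v, w` with `Av = 0`, `wᴴA = 0` and `wᴴv = 1`, that the kernel of `A` is
one-dimensional, equal to `span{v}` and to the kernel of `A²`, and that every nonzero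
eigenvalue of `A` has strictly negative real part. Then the improper integral
`A⁺ = ∫₀^∞ (v·wᴴ − e^{Aτ}) dτ` converges entrywise, and `A⁺` is the group inverse of `A`:
`AA⁺A = A`, `A⁺AA⁺ = A⁺` and `AA⁺ = A⁺A`. -/
theorem groupInverse_integral
    {N : Type} [Fintype N] [DecidableEq N]
    (A : Matrix N N ℂ) (v w : N → ℂ)
    (hv : A *ᵥ v = 0) (hw : Matrix.vecMul (star w) A = 0) (hwv : star w ⬝ᵥ v = 1)
    (hker : ∀ x : N → ℂ, A *ᵥ x = 0 → ∃ c : ℂ, x = c • v)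
    (hker2 : ∀ x : N → ℂ, (A * A) *ᵥ x = 0 → A *ᵥ x = 0)
    (heig : ∀ μ : ℂ, μ ≠ 0 → (∃ x : N → ℂ, x ≠ 0 ∧ A *ᵥ x = μ • x) → μ.re < 0) :
    (∀ i j, IntegrableOn
        (fun τ : ℝ => (Matrix.vecMulVec v (star w) - NormedSpace.exp ((τ : ℂ) • A)) i j)
        (Set.Ioi 0))
    ∧ A * groupInverseIntegral A v w * A = A
    ∧ groupInverseIntegral A v w * A * groupInverseIntegral A v w = groupInverseIntegral A v w
    ∧ A * groupInverseIntegral A v w = groupInverseIntegral A v w * A :=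
  groupInverse_integral_general A v w hv hw hwv hker heig
end
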